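/- arXiv:1508.03058 — 2 statements merged into one kernel-verified Lean document; each statement's English description precedes it below -/
import Mathlib

section
/- Constancy of the sign of twisting for near force-free fields: let H : ℝ³ → ℝ³ be continuously differentiable with continuous curl, let μ > 0 be a constant, and let V ⊆ ℝ³ be a preconnected set such that for every x ∈ V the near force-free inequality ‖curl H x‖² · ‖μ • H x‖² > ‖(curl H x) × (μ • H x)‖² holds. Then the helicity density function x ↦ ⟪H x, curl H x⟫ is nonzero at every point of V, and moreover it is either strictly positive at every point of V or strictly negative at every point of V. -/
noncomputable section
open scoped RealInnerProductSpace

/-- `ℝ³` as Euclidean space. -/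
abbrev R3 : Type := EuclideanSpace ℝ (Fin 3)

/-- Cross product on `ℝ³ = EuclideanSpace ℝ (Fin 3)`, transported from Mathlib's
`crossProduct` on `Fin 3 → ℝ`. -/
def cross3 (u v : R3) : R3 :=
  (EuclideanSpace.equiv (Fin 3) ℝ).symm
    (crossProduct ((EuclideanSpace.equiv (Fin 3) ℝ) u) ((EuclideanSpace.equiv (Fin 3) ℝ) v))

/-- Partial derivative of a vector field in the `i`-th coordinate direction,
computed via `fderiv ℝ`. -/
def pd (i : Fin 3) (F : R3 → R3) (x : R3) : R3 :=
  fderiv ℝ F x (EuclideanSpace.single i 1)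

/-- The curl of a vector field on `ℝ³`: with coordinates indexed by `0, 1, 2`, its
components are `(∂₁F₂ − ∂₂F₁, ∂₂F₀ − ∂₀F₂, ∂₀F₁ − ∂₁F₀)`. -/
def curl3 (F : R3 → R3) (x : R3) : R3 :=
  (EuclideanSpace.equiv (Fin 3) ℝ).symm
    ![pd 1 F x 2 - pd 2 F x 1,
      pd 2 F x 0 - pd 0 F x 2,
      pd 0 F x 1 - pd 1 F x 0]

/-- The divergence of a vector field on `ℝ³`. -/
def div3 (F : R3 → R3) (x : R3) : ℝ := ∑ i, pd i F x i

lemma lagrange_cross3 (a b : R3) : ⟪a,b⟫ ^ 2 = ‖a‖^2 * ‖b‖^2 - ‖cross3 a b‖^2 := by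
  have h1 : ∀ v : R3, ‖v‖^2 = ⟪v,v⟫ := fun v => (real_inner_self_eq_norm_sq v).symm
  simp only [h1, PiLp.inner_apply, RCLike.inner_apply, conj_trivial, cross3]
  simp [crossProduct, Fin.sum_univ_three]
  ring

/-- Constancy of the sign of twisting for near force-free fields: on a preconnected
set where the near force-free inequality holds, the helicity density `⟪H, curl H⟫`
is everywhere nonzero, and has constant sign. -/
theorem helicity_density_sign_constant_of_near_force_free
    (H : R3 → R3) (hH : ContDiff ℝ 1 H) (hcurl : Continuous fun x => curl3 H x)
    (μ : ℝ) (hμ : 0 < μ) (V : Set R3) (hV : IsPreconnected V)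
    (hineq : ∀ x ∈ V,
      ‖curl3 H x‖ ^ 2 * ‖μ • H x‖ ^ 2 > ‖cross3 (curl3 H x) (μ • H x)‖ ^ 2) :
    (∀ x ∈ V, ⟪H x, curl3 H x⟫ ≠ 0) ∧
      ((∀ x ∈ V, 0 < ⟪H x, curl3 H x⟫) ∨ (∀ x ∈ V, ⟪H x, curl3 H x⟫ < 0)) := by
  set f : R3 → ℝ := fun x => ⟪H x, curl3 H x⟫ with hf
  have hne : ∀ x ∈ V, f x ≠ 0 := by
    intro x hx h0
    have hl := lagrange_cross3 (curl3 H x) (μ • H x)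
    have hi : ⟪curl3 H x, μ • H x⟫ = μ * f x := by
      rw [real_inner_smul_right, real_inner_comm]
    rw [hi, h0, mul_zero] at hl
    have := hineq x hx
    nlinarith
  have hcont : Continuous f := (hH.continuous.inner hcurl)
  refine ⟨hne, ?_⟩
  by_cases hpos : ∀ x ∈ V, 0 < f x
  · exact Or.inl hpos
  · push_neg at hpos
    obtain ⟨a, ha, hfa⟩ := hpos
    have hfa' : f a < 0 := lt_of_le_of_ne hfa (hne a ha)
    refine Or.inr fun b hb => ?_
    by_contra hfb
    push_neg at hfb
    have hfb' : 0 < f b := lt_of_le_of_ne hfb (Ne.symm (hne b hb))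
    obtain ⟨c, hc, hc0⟩ := hV.intermediate_value ha hb hcont.continuousOn
      (Set.mem_Icc.mpr ⟨hfa'.le, hfb'.le⟩)
    exact hne c hc hc0
end
end

section
/- Gauge invariance of the current helicity functional: let H : ℝ³ → ℝ³ be a continuously differentiable vector field with compact support and φ : ℝ³ → ℝ a twice continuously differentiable function with compact support. Then ∫ x, ⟪H x + grad φ x, curl (fun y => H y + grad φ y) x⟫ = ∫ x, ⟪H x, curl H x⟫, where the integrals are Lebesgue integrals over ℝ³. (Adding an exact 1-form, i.e. a gradient, does not change the helicity when boundary terms vanish.) -/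
noncomputable section
open scoped RealInnerProductSpace

/-!
Since the Hessian of `φ` is symmetric, `curl ∇φ = 0`, so `curl (H + ∇φ) = curl H`. Integrating by
parts coordinatewise, `curl` is symmetric for the `L²` pairing as soon as one of the two fields has
compact support: `∫ ⟪A, curl B⟫ = ∫ ⟪curl A, B⟫`. Hence
`∫ ⟪H + ∇φ, curl H⟫ = ∫ ⟪curl (H + ∇φ), H⟫ = ∫ ⟪curl H, H⟫`.
-/

open MeasureTheory InnerProductSpace

section Gradient

variable {E : Type*} [NormedAddCommGroup E] [InnerProductSpace ℝ E] [CompleteSpace E]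

theorem gradient_eq_toDual_symm_comp_fderiv (φ : E → ℝ) :
    gradient φ = (toDual ℝ E).symm ∘ fderiv ℝ φ := rfl

theorem ContDiff.gradient {φ : E → ℝ} {n : WithTop ℕ∞} (hφ : ContDiff ℝ (n + 1) φ) :
    ContDiff ℝ n (gradient φ) :=
  (toDual ℝ E).symm.contDiff.comp (hφ.fderiv_right le_rfl)

theorem HasCompactSupport.gradient {φ : E → ℝ} (hφ : HasCompactSupport φ) :
    HasCompactSupport (gradient φ) :=
  (hφ.fderiv (𝕜 := ℝ)).comp_left (map_zero (toDual ℝ E).symm)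

end Gradient

theorem EuclideanSpace.toDual_symm_apply_ofLp {ι : Type*} [Fintype ι] [DecidableEq ι]
    (L : StrongDual ℝ (EuclideanSpace ℝ ι)) (j : ι) :
    (toDual ℝ (EuclideanSpace ℝ ι)).symm L j = L (EuclideanSpace.single j 1) := by
  rw [← InnerProductSpace.toDual_symm_apply, EuclideanSpace.inner_single_right, one_mul,
    RCLike.conj_to_real]

theorem HasCompactSupport.euclideanSpace_apply {α ι : Type*} [TopologicalSpace α]
    {f : α → EuclideanSpace ℝ ι} (hf : HasCompactSupport f) (i : ι) :
    HasCompactSupport fun x => f x i :=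
  hf.comp_left (g := fun v : EuclideanSpace ℝ ι => v i) rfl

theorem integral_mul_fderiv_eq_neg_fderiv_mul_of_hasCompactSupport {E : Type*}
    [NormedAddCommGroup E] [NormedSpace ℝ E] [FiniteDimensional ℝ E] [MeasurableSpace E]
    [BorelSpace E] {μ : Measure E} [μ.IsAddHaarMeasure] {f g : E → ℝ}
    (hf : ContDiff ℝ 1 f) (hfc : HasCompactSupport f) (hg : ContDiff ℝ 1 g) (v : E) :
    ∫ x, f x * fderiv ℝ g x v ∂μ = -∫ x, fderiv ℝ f x v * g x ∂μ := by
  have hdf : Continuous fun x => fderiv ℝ f x v :=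
    (hf.continuous_fderiv one_ne_zero).clm_apply continuous_const
  have hdg : Continuous fun x => fderiv ℝ g x v :=
    (hg.continuous_fderiv one_ne_zero).clm_apply continuous_const
  exact integral_mul_fderiv_eq_neg_fderiv_mul_of_integrable
    ((hdf.mul hg.continuous).integrable_of_hasCompactSupport
      (hfc.fderiv_apply (𝕜 := ℝ) v).mul_right)
    ((hf.continuous.mul hdg).integrable_of_hasCompactSupport hfc.mul_right)
    ((hf.continuous.mul hg.continuous).integrable_of_hasCompactSupport hfc.mul_right)
    (fun x _ => hf.differentiable one_ne_zero x) (fun x _ => hg.differentiable one_ne_zero x)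

-- Indices live in `Fin 3`, so `i + 1` and `i + 2` wrap around: this is the cyclic form of `curl3`.
theorem curl3_apply (F : R3 → R3) (x : R3) (i : Fin 3) :
    curl3 F x i = pd (i + 1) F x (i + 2) - pd (i + 2) F x (i + 1) := by
  fin_cases i <;> rfl

theorem pd_add {F G : R3 → R3} {x : R3} (hF : DifferentiableAt ℝ F x)
    (hG : DifferentiableAt ℝ G x) (i : Fin 3) :
    pd i (fun y => F y + G y) x = pd i F x + pd i G x := by
  simp [pd, fderiv_fun_add hF hG]

theorem curl3_add {F G : R3 → R3} {x : R3} (hF : DifferentiableAt ℝ F x)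
    (hG : DifferentiableAt ℝ G x) :
    curl3 (fun y => F y + G y) x = curl3 F x + curl3 G x := by
  ext i
  simp only [curl3_apply, pd_add hF hG, PiLp.add_apply]
  ring

theorem pd_gradient (φ : R3 → ℝ) (x : R3) (i j : Fin 3) :
    pd i (gradient φ) x j =
      fderiv ℝ (fderiv ℝ φ) x (EuclideanSpace.single i 1) (EuclideanSpace.single j 1) := by
  rw [pd, gradient_eq_toDual_symm_comp_fderiv, LinearIsometryEquiv.comp_fderiv]
  exact EuclideanSpace.toDual_symm_apply_ofLp _ j

theorem curl3_gradient {φ : R3 → ℝ} {x : R3} (hφ : ContDiffAt ℝ 2 φ x) :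
    curl3 (gradient φ) x = 0 := by
  have hsymm := hφ.isSymmSndFDerivAt (by simp [minSmoothness_of_isRCLikeNormedField])
  ext i
  rw [curl3_apply, pd_gradient, pd_gradient, hsymm, sub_self, PiLp.zero_apply]

theorem pd_apply_eq_fderiv {F : R3 → R3} {x : R3} (hF : DifferentiableAt ℝ F x) (j k : Fin 3) :
    pd j F x k = fderiv ℝ (fun y => F y k) x (EuclideanSpace.single j 1) := by
  have hcomp : (fun y => F y k) = (EuclideanSpace.proj k : R3 →L[ℝ] ℝ) ∘ F := rfl
  rw [hcomp, fderiv_comp x (ContinuousLinearMap.differentiableAt _) hF,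
    ContinuousLinearMap.fderiv]
  rfl

theorem continuous_pd_apply {F : R3 → R3} (hF : ContDiff ℝ 1 F) (j k : Fin 3) :
    Continuous fun x => pd j F x k :=
  (EuclideanSpace.proj k : R3 →L[ℝ] ℝ).continuous.comp
    ((hF.continuous_fderiv one_ne_zero).clm_apply continuous_const)

section VectorField

variable {A B : R3 → R3}

theorem integral_mul_pd_eq_neg (hA : ContDiff ℝ 1 A) (hAc : HasCompactSupport A)
    (hB : ContDiff ℝ 1 B) (i j k : Fin 3) :
    ∫ x, A x i * pd j B x k = -∫ x, pd j A x i * B x k := by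
  simp only [pd_apply_eq_fderiv (hA.differentiable one_ne_zero _),
    pd_apply_eq_fderiv (hB.differentiable one_ne_zero _)]
  exact integral_mul_fderiv_eq_neg_fderiv_mul_of_hasCompactSupport ((contDiff_piLp 2).1 hA i)
    (hAc.euclideanSpace_apply i) ((contDiff_piLp 2).1 hB k) _

theorem integral_inner_curl3_comm (hA : ContDiff ℝ 1 A) (hAc : HasCompactSupport A)
    (hB : ContDiff ℝ 1 B) :
    ∫ x, ⟪A x, curl3 B x⟫ = ∫ x, ⟪curl3 A x, B x⟫ := by
  have hAB : ∀ i j k, Integrable fun x => A x i * pd j B x k := fun i j k =>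
    (((contDiff_piLp 2).1 hA i).continuous.mul
      (continuous_pd_apply hB j k)).integrable_of_hasCompactSupport
        (hAc.euclideanSpace_apply i).mul_right
  have hdAB : ∀ i j k, Integrable fun x => pd j A x i * B x k := fun i j k =>
    ((continuous_pd_apply hA j i).mul
      ((contDiff_piLp 2).1 hB k).continuous).integrable_of_hasCompactSupport
        ((hAc.fderiv_apply (𝕜 := ℝ) _).euclideanSpace_apply i).mul_right
  calc ∫ x, ⟪A x, curl3 B x⟫
      = ∫ x, ∑ i, (A x i * pd (i + 1) B x (i + 2) - A x i * pd (i + 2) B x (i + 1)) := by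
        simp [PiLp.inner_apply, curl3_apply, mul_sub, mul_comm]
    _ = ∑ i, ((∫ x, A x i * pd (i + 1) B x (i + 2)) - ∫ x, A x i * pd (i + 2) B x (i + 1)) := by
        rw [integral_finsetSum _ fun i _ => by exact (hAB _ _ _).sub (hAB _ _ _)]
        exact Finset.sum_congr rfl fun i _ => integral_sub (hAB _ _ _) (hAB _ _ _)
    _ = ∑ i, ((∫ x, pd (i + 1) A x (i + 2) * B x i) - ∫ x, pd (i + 2) A x (i + 1) * B x i) := by
        simp only [integral_mul_pd_eq_neg hA hAc hB, Fin.sum_univ_three, Fin.reduceAdd]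
        ring
    _ = ∫ x, ∑ i, (pd (i + 1) A x (i + 2) * B x i - pd (i + 2) A x (i + 1) * B x i) := by
        rw [integral_finsetSum _ fun i _ => by exact (hdAB _ _ _).sub (hdAB _ _ _)]
        exact Finset.sum_congr rfl fun i _ => (integral_sub (hdAB _ _ _) (hdAB _ _ _)).symm
    _ = ∫ x, ⟪curl3 A x, B x⟫ := by
        simp [PiLp.inner_apply, curl3_apply, mul_comm, mul_sub]

end VectorField

/-- Gauge invariance of the current helicity functional: adding a gradient to a
compactly supported `C¹` field does not change the helicity integral. -/
theorem helicity_gauge_invariant (H : R3 → R3) (hH : ContDiff ℝ 1 H)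
    (hHc : HasCompactSupport H) (φ : R3 → ℝ) (hφ : ContDiff ℝ 2 φ)
    (hφc : HasCompactSupport φ) :
    ∫ x : R3, ⟪H x + gradient φ x, curl3 (fun y => H y + gradient φ y) x⟫
      = ∫ x : R3, ⟪H x, curl3 H x⟫ := by
  have hG : ContDiff ℝ 1 (gradient φ) := hφ.gradient
  have hcurl : curl3 (fun y => H y + gradient φ y) = curl3 H := funext fun x => by
    rw [curl3_add (hH.differentiable one_ne_zero x) (hG.differentiable one_ne_zero x),
      curl3_gradient hφ.contDiffAt, add_zero]
  calc ∫ x, ⟪H x + gradient φ x, curl3 (fun y => H y + gradient φ y) x⟫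
      = ∫ x, ⟪H x + gradient φ x, curl3 H x⟫ := by rw [hcurl]
    _ = ∫ x, ⟪curl3 (fun y => H y + gradient φ y) x, H x⟫ :=
        integral_inner_curl3_comm (hH.add hG) (hHc.add hφc.gradient) hH
    _ = ∫ x, ⟪H x, curl3 H x⟫ := by simp only [hcurl, real_inner_comm]
end
end
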